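/- Let A ~ Bin(n, α) with CDF F_A and B ~ Bin(n, α') with CDF F_B, where α' > α. Then the random variable p = e·F_A(B) satisfies P(p ≤ c) ≤ c for all c ∈ [0,1]; in particular p is a valid p-value (super-uniform) under the hypothesis α' > α. -/

import Mathlib

open MeasureTheory

/-- CDF of a Binomial(n, p) random variable evaluated at `s`. -/
noncomputable def binCDF (n : ℕ) (p : ℝ) (s : ℕ) : ℝ :=
  ∑ j ∈ Finset.range (s + 1), (n.choose j : ℝ) * p ^ j * (1 - p) ^ (n - j)

/-!
The event `e · F_A(B) ≤ c` lies in the directed union of the events `B ≤ s` over the `s` with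
`e · F_A(s) ≤ c`, and each of these has probability `F_B(s) ≤ F_A(s) ≤ c`. The dominance
`F_B ≤ F_A` holds because `F_A(s)` is a partial sum of Bernstein polynomials in the success
probability, whose derivative telescopes to `-n · b_{n-1,s} ≤ 0`.
-/

open Finset Polynomial Set

theorem measure_comp_le_le_of_cdf_le {Ω ι : Type*} [MeasurableSpace Ω] [LinearOrder ι]
    [Countable ι] (μ : Measure Ω) {F : ι → ℝ} {B : Ω → ι}
    (hcdf : ∀ s, μ {ω | B ω ≤ s} ≤ ENNReal.ofReal (F s)) (c : ℝ) :
    μ {ω | F (B ω) ≤ c} ≤ ENNReal.ofReal c := by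
  have hcover : {ω | F (B ω) ≤ c} ⊆ ⋃ s : {s // F s ≤ c}, {ω | B ω ≤ s} :=
    fun ω hω => mem_iUnion.2 ⟨⟨B ω, hω⟩, le_rfl⟩
  have hdir : Directed (· ⊆ ·) fun s : {s // F s ≤ c} => {ω | B ω ≤ s} :=
    Monotone.directed_le fun _ _ hst _ hω => le_trans hω hst
  calc μ {ω | F (B ω) ≤ c} ≤ μ (⋃ s : {s // F s ≤ c}, {ω | B ω ≤ s}) := measure_mono hcover
    _ = ⨆ s : {s // F s ≤ c}, μ {ω | B ω ≤ s} := hdir.measure_iUnion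
    _ ≤ ENNReal.ofReal c := iSup_le fun s => (hcdf s).trans (ENNReal.ofReal_le_ofReal s.2)

theorem bernsteinPolynomial_eval_nonneg (n ν : ℕ) {x : ℝ} (hx : x ∈ Icc (0 : ℝ) 1) :
    0 ≤ (bernsteinPolynomial ℝ n ν).eval x := by
  have hx' : 0 ≤ 1 - x := sub_nonneg.2 hx.2
  simp only [bernsteinPolynomial, eval_mul, eval_pow, eval_sub, eval_one, eval_X, eval_natCast]
  exact mul_nonneg (mul_nonneg (Nat.cast_nonneg _) (pow_nonneg hx.1 _)) (pow_nonneg hx' _)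

theorem derivative_sum_range_bernsteinPolynomial {R : Type*} [CommRing R] (n s : ℕ) :
    derivative (∑ ν ∈ range (s + 1), bernsteinPolynomial R n ν) =
      -n * bernsteinPolynomial R (n - 1) s := by
  induction s with
  | zero => simp [bernsteinPolynomial.derivative_zero]
  | succ s ih =>
    rw [sum_range_succ, derivative_add, ih, bernsteinPolynomial.derivative_succ]
    ring

theorem binCDF_eq_eval_sum_bernsteinPolynomial (n : ℕ) (p : ℝ) (s : ℕ) :
    binCDF n p s = (∑ ν ∈ range (s + 1), bernsteinPolynomial ℝ n ν).eval p := by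
  simp [binCDF, bernsteinPolynomial, eval_finsetSum]

theorem binCDF_nonneg (n : ℕ) {p : ℝ} (hp : p ∈ Icc (0 : ℝ) 1) (s : ℕ) : 0 ≤ binCDF n p s := by
  rw [binCDF_eq_eval_sum_bernsteinPolynomial, eval_finsetSum]
  exact sum_nonneg fun ν _ => bernsteinPolynomial_eval_nonneg n ν hp

theorem binCDF_antitoneOn (n s : ℕ) : AntitoneOn (fun p => binCDF n p s) (Icc 0 1) := by
  simp only [binCDF_eq_eval_sum_bernsteinPolynomial]
  set P := ∑ ν ∈ range (s + 1), bernsteinPolynomial ℝ n ν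
  refine antitoneOn_of_deriv_nonpos (convex_Icc 0 1) P.continuousOn P.differentiableOn
    fun x hx => ?_
  rw [interior_Icc] at hx
  rw [Polynomial.deriv, derivative_sum_range_bernsteinPolynomial, neg_mul, eval_neg, eval_mul,
    eval_natCast, neg_nonpos]
  exact mul_nonneg n.cast_nonneg (bernsteinPolynomial_eval_nonneg _ _ (Ioo_subset_Icc_self hx))

theorem binomial_trial_p_value_valid_general
    {Ω : Type*} [MeasurableSpace Ω] (μ : Measure Ω)
    (n : ℕ) (α α' : ℝ) (hα : 0 ≤ α) (hαα' : α < α') (hα' : α' ≤ 1)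
    (B : Ω → ℕ)
    (hBdist : ∀ s : ℕ, μ {ω | B ω ≤ s} = ENNReal.ofReal (binCDF n α' s)) :
    ∀ c ∈ Set.Icc (0 : ℝ) 1,
      μ {ω | Real.exp 1 * binCDF n α (B ω) ≤ c} ≤ ENNReal.ofReal c := by
  intro c _
  have hαI : α ∈ Icc (0 : ℝ) 1 := ⟨hα, hαα'.le.trans hα'⟩
  refine measure_comp_le_le_of_cdf_le μ (F := fun s => Real.exp 1 * binCDF n α s) (fun s => ?_) c
  rw [hBdist]
  refine ENNReal.ofReal_le_ofReal ?_
  calc binCDF n α' s ≤ binCDF n α s :=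
        binCDF_antitoneOn n s hαI ⟨hα.trans hαα'.le, hα'⟩ hαα'.le
    _ ≤ Real.exp 1 * binCDF n α s :=
        le_mul_of_one_le_left (binCDF_nonneg n hαI s) (Real.one_le_exp zero_le_one)

/-- Let `A ~ Bin(n,α)` with CDF `F_A` and `B ~ Bin(n,α')` with `α' > α`. Then the
random variable `p = e·F_A(B)` is super-uniform: `P(p ≤ c) ≤ c` for all `c ∈ [0,1]`. -/
theorem binomial_trial_p_value_valid
    {Ω : Type*} [MeasurableSpace Ω] (μ : Measure Ω) [IsProbabilityMeasure μ]
    (n : ℕ) (α α' : ℝ) (hα : 0 ≤ α) (hαα' : α < α') (hα' : α' ≤ 1)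
    (B : Ω → ℕ) (hB : Measurable B)
    (hBdist : ∀ s : ℕ, μ {ω | B ω ≤ s} = ENNReal.ofReal (binCDF n α' s)) :
    ∀ c ∈ Set.Icc (0 : ℝ) 1,
      μ {ω | Real.exp 1 * binCDF n α (B ω) ≤ c} ≤ ENNReal.ofReal c :=
  binomial_trial_p_value_valid_general μ n α α' hα hαα' hα' B hBdist
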